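/- Let $L$ be a pre-Lie-Rinehart algebra over $R$ with anchor $\rho$, and write $X \rhd f := \rho(X)(f)$ for $f \in R$. For $f \in R$ and $Y \in L$ let $df \cdot Y \in \mathrm{Hom}_R(L,L)$ be the map $X \mapsto (X \rhd f) Y$. Then $X \rhd (df \cdot Y) = df \cdot (X \rhd Y) + d(X \rhd f) \cdot Y - (df \cdot Y) \circ dX$, where $(X \rhd \phi)(Z) = X \rhd \phi(Z) - \phi(X \rhd Z)$ and $dX(Z) = Z \rhd X$. -/

import Mathlib

section PreLieRinehart

variable {R L : Type} [CommRing R] [AddCommGroup L] [Module R L]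
  (ρ : L → R → R) (tri : L → L → L)

theorem tri_tri_smul_eq
    (haddr : ∀ X Y Z : L, tri X (Y + Z) = tri X Y + tri X Z)
    (hconn : ∀ (X : L) (f : R) (Y : L), tri X (f • Y) = ρ X f • Y + f • tri X Y)
    (X Z Y : L) (f : R) :
    tri X (tri Z (f • Y))
      = ρ X (ρ Z f) • Y + ρ Z f • tri X Y + ρ X f • tri Z Y + f • tri X (tri Z Y) := by
  rw [hconn Z, haddr, hconn X, hconn X]
  abel

/-- The Hessian `(X, Z) ↦ X ▷ (Z ▷ f) - (X ▷ Z) ▷ f` is symmetric (tested on any `Y`): subtract `f`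
times the pre-Lie identity at `Y` from the one at `f • Y`. -/
theorem hessian_smul_comm
    (haddr : ∀ X Y Z : L, tri X (Y + Z) = tri X Y + tri X Z)
    (hconn : ∀ (X : L) (f : R) (Y : L), tri X (f • Y) = ρ X f • Y + f • tri X Y)
    (hpre : ∀ X Y Z : L,
      tri X (tri Y Z) - tri (tri X Y) Z = tri Y (tri X Z) - tri (tri Y X) Z)
    (X Z Y : L) (f : R) :
    (ρ X (ρ Z f) - ρ (tri X Z) f) • Y = (ρ Z (ρ X f) - ρ (tri Z X) f) • Y := by
  have hfY := hpre X Z (f • Y)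
  rw [tri_tri_smul_eq ρ tri haddr hconn, tri_tri_smul_eq ρ tri haddr hconn,
    hconn (tri X Z), hconn (tri Z X)] at hfY
  linear_combination (norm := module) hfY - f • hpre X Z Y

end PreLieRinehart

theorem preLieRinehart_tri_df_general
    (R L : Type) [CommRing R]
    [AddCommGroup L] [Module R L]
    -- the anchor map of the Lie-Rinehart structure (a derivation in each `X`)
    (ρ : L → R → R)
    -- the flat torsion-free connection, i.e. the pre-Lie product `X ▷ Y`
    (tri : L → L → L)
    (haddr : ∀ X Y Z : L, tri X (Y + Z) = tri X Y + tri X Z)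
    (hconn : ∀ (X : L) (f : R) (Y : L),
      tri X (f • Y) = ρ X f • Y + f • tri X Y)
    -- the left pre-Lie identity (flatness and torsion-freeness)
    (hpre : ∀ X Y Z : L,
      tri X (tri Y Z) - tri (tri X Y) Z = tri Y (tri X Z) - tri (tri Y X) Z) :
    ∀ (X Y Z : L) (f : R),
      tri X ((ρ Z f) • Y) - (ρ (tri X Z) f) • Y
        = (ρ Z f) • tri X Y + (ρ Z (ρ X f)) • Y - (ρ (tri Z X) f) • Y := by
  intro X Y Z f
  rw [hconn X (ρ Z f) Y]
  linear_combination (norm := module) hessian_smul_comm ρ tri haddr hconn hpre X Z Y f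

/-- Let `L` be a pre-Lie-Rinehart algebra over `R` with anchor `ρ`, write
`X ▷ f := ρ X f` for `f ∈ R` and `X ▷ Y := tri X Y` for `Y ∈ L`.  For `f ∈ R`
and `Y ∈ L`, `df·Y ∈ Hom_R(L,L)` is the map `Z ↦ (Z ▷ f) • Y`, and
`dX(Z) = Z ▷ X`.  Then
`X ▷ (df·Y) = df·(X ▷ Y) + d(X ▷ f)·Y - (df·Y) ∘ dX`,
where `(X ▷ φ)(Z) = X ▷ φ(Z) - φ(X ▷ Z)`.  Evaluated at `Z` this reads as in
the conclusion below. -/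
theorem preLieRinehart_tri_df
    (k R L : Type) [Field k] [CommRing R] [Algebra k R]
    [AddCommGroup L] [Module k L] [Module R L] [IsScalarTower k R L]
    -- the anchor map of the Lie-Rinehart structure (a derivation in each `X`)
    (ρ : L → R → R)
    (hρder : ∀ (X : L) (f g : R), ρ X (f * g) = ρ X f * g + f * ρ X g)
    (hρadd : ∀ (X : L) (f g : R), ρ X (f + g) = ρ X f + ρ X g)
    (hρXadd : ∀ (X Y : L) (f : R), ρ (X + Y) f = ρ X f + ρ Y f)
    (hρRlin : ∀ (g : R) (X : L) (f : R), ρ (g • X) f = g * ρ X f)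
    -- the flat torsion-free connection, i.e. the pre-Lie product `X ▷ Y`
    (tri : L → L → L)
    (haddl : ∀ X Y Z : L, tri (X + Y) Z = tri X Z + tri Y Z)
    (haddr : ∀ X Y Z : L, tri X (Y + Z) = tri X Y + tri X Z)
    (hRlin : ∀ (f : R) (X Y : L), tri (f • X) Y = f • tri X Y)
    (hconn : ∀ (X : L) (f : R) (Y : L),
      tri X (f • Y) = ρ X f • Y + f • tri X Y)
    -- the left pre-Lie identity (flatness and torsion-freeness)
    (hpre : ∀ X Y Z : L,
      tri X (tri Y Z) - tri (tri X Y) Z = tri Y (tri X Z) - tri (tri Y X) Z) :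
    ∀ (X Y Z : L) (f : R),
      tri X ((ρ Z f) • Y) - (ρ (tri X Z) f) • Y
        = (ρ Z f) • tri X Y + (ρ Z (ρ X f)) • Y - (ρ (tri Z X) f) • Y :=
  preLieRinehart_tri_df_general R L ρ tri haddr hconn hpre
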